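/- For every w ∈ S_n there is exactly one subset I ⊆ Φ⁺ with ∑_{α∈I} α = ρ − wρ, namely I = { α ∈ Φ⁺ : α ∉ wΦ⁺ }. (Equivalently: the weight ρ − wρ occurs with multiplicity exactly one in the multiset P of subset-sums of positive roots.) -/

import Mathlib

open Finset

/-- The positive root `ε_i − ε_j` (for `i < j`) of `gl_n`, as a vector in `ℚ^n`. -/
def posRoot {n : ℕ} (i j : Fin n) : Fin n → ℚ :=
  fun k => (if k = i then 1 else 0) - (if k = j then 1 else 0)

/-- The set `Φ⁺ = { ε_i − ε_j : i < j }` of positive roots of `gl_n`. -/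
def PosRoots (n : ℕ) : Finset (Fin n → ℚ) :=
  ((Finset.univ : Finset (Fin n × Fin n)).filter (fun p => p.1 < p.2)).image
    (fun p => posRoot p.1 p.2)

/-- The action of `S_n` on weights by permuting coordinates: `(wλ)_i = λ_{w⁻¹ i}`. -/
def wAct {n : ℕ} (w : Equiv.Perm (Fin n)) (v : Fin n → ℚ) : Fin n → ℚ :=
  fun i => v (w⁻¹ i)

/-- `ρ = (1/2) ∑_{α ∈ Φ⁺} α`. -/
def rho (n : ℕ) : Fin n → ℚ := (1 / 2 : ℚ) • ∑ α ∈ PosRoots n, α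

/-- The dot action `w·λ = w(λ+ρ) − ρ`. -/
def dotAct {n : ℕ} (w : Equiv.Perm (Fin n)) (lam : Fin n → ℚ) : Fin n → ℚ :=
  wAct w (lam + rho n) - rho n

/-- A weight is integral if all of its coordinates are integers. -/
def Integral {n : ℕ} (lam : Fin n → ℚ) : Prop := ∀ i, ∃ m : ℤ, lam i = (m : ℚ)

/-- A weight is dominant if it is integral and `λ_i − λ_{i+1} ≥ 0` for all consecutive `i`. -/
def Dominant {n : ℕ} (lam : Fin n → ℚ) : Prop :=
  Integral lam ∧ ∀ i j : Fin n, (i : ℕ) + 1 = (j : ℕ) → 0 ≤ lam i - lam j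

/-- A weight is regular if `λ_i − λ_j` is a nonzero integer for all `i ≠ j`. -/
def Regular {n : ℕ} (lam : Fin n → ℚ) : Prop :=
  ∀ i j : Fin n, i ≠ j → ∃ m : ℤ, m ≠ 0 ∧ lam i - lam j = (m : ℚ)

/-! The inversion set `{α ∈ Φ⁺ | α ∉ wΦ⁺}` is `{α ∈ Φ⁺ | ⟨α, wρ⟩ < 0}`. Its sum has `k`-th
coordinate `#{j | w⁻¹ j < w⁻¹ k} - #{j | j < k} = w⁻¹ k - k = (ρ - wρ)_k`. Since `wρ` is
regular, `⟨α, wρ⟩ ≠ 0` for every `α ∈ Φ⁺`, so the inversion set is the unique subset `I ⊆ Φ⁺`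
minimising `∑_{α ∈ I} ⟨α, wρ⟩ = ⟨∑_{α ∈ I} α, wρ⟩`. Any `I` with `∑_{α ∈ I} α = ρ - wρ`
attains that minimum, hence is the inversion set. -/

open Matrix

theorem Finset.eq_filter_neg_of_sum_le {ι M : Type*} [AddCommGroup M] [LinearOrder M]
    [IsOrderedAddMonoid M] {s I : Finset ι} {c : ι → M} (hc : ∀ a ∈ s, c a ≠ 0) (hI : I ⊆ s)
    (h : ∑ a ∈ I, c a ≤ ∑ a ∈ s with c a < 0, c a) : I = {a ∈ s | c a < 0} := by
  classical
  set N := {a ∈ s | c a < 0}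
  have hle : ∑ a ∈ I \ N, c a ≤ ∑ a ∈ N \ I, c a := by
    rwa [← sub_nonpos, sum_sdiff_sub_sum_sdiff, sub_nonpos]
  have hpos : ∀ a ∈ I \ N, 0 < c a := fun a ha => by
    simp only [N, mem_sdiff, mem_filter, not_and, not_lt] at ha
    exact (ha.2 (hI ha.1)).lt_of_ne' (hc a (hI ha.1))
  have hneg : ∀ a ∈ N \ I, c a < 0 := fun a ha => (mem_filter.1 (mem_sdiff.1 ha).1).2
  refine (sdiff_eq_empty_iff_subset.1 ?_).antisymm (sdiff_eq_empty_iff_subset.1 ?_)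
  · refine not_nonempty_iff_eq_empty.1 fun hne => ?_
    exact ((sum_pos hpos hne).trans_le hle).not_ge (sum_nonpos fun a ha => (hneg a ha).le)
  · refine not_nonempty_iff_eq_empty.1 fun hne => ?_
    exact ((sum_neg hneg hne).trans_le' hle).not_ge (sum_nonneg fun a ha => (hpos a ha).le)

theorem Function.Injective.ite_and_sub_ite_and {α β R : Type*} [LinearOrder α] [LinearOrder β]
    [AddGroupWithOne R] {f : α → β} (hf : Function.Injective f) (a b : α) :
    ((if a < b ∧ f b < f a then 1 else 0) - (if b < a ∧ f a < f b then 1 else 0) : R) =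
      (if f b < f a then 1 else 0) - (if b < a then 1 else 0) := by
  rcases lt_trichotomy a b with hab | rfl | hab
  · rcases (hf.ne hab.ne).lt_or_gt with h | h <;> simp [hab, hab.not_gt, h, h.not_gt]
  · simp
  · rcases (hf.ne hab.ne).lt_or_gt with h | h <;> simp [hab, hab.not_gt, h, h.not_gt]

theorem Fin.sum_ite_lt {R : Type*} [AddCommMonoidWithOne R] {n : ℕ} (m : Fin n) :
    ∑ j : Fin n, (if j < m then (1 : R) else 0) = m := by
  simp [Finset.sum_boole, Finset.filter_gt_eq_Iio]

theorem Fin.sum_ite_gt {R : Type*} [AddCommGroupWithOne R] {n : ℕ} (m : Fin n) :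
    ∑ j : Fin n, (if m < j then (1 : R) else 0) = n - 1 - m := by
  have hm : 1 + (m : ℕ) ≤ n := by omega
  simp only [Finset.sum_boole, Finset.filter_lt_eq_Ioi, Fin.card_Ioi, Nat.sub_sub]
  rw [Nat.cast_sub hm, Nat.cast_add, Nat.cast_one, sub_sub]

section

variable {n : ℕ}

theorem mem_posRoots {α : Fin n → ℚ} :
    α ∈ PosRoots n ↔ ∃ i j, i < j ∧ posRoot i j = α := by
  simp [PosRoots]

theorem eq_and_eq_of_posRoot_eq {i j a b : Fin n} (hij : i ≠ j) (h : posRoot i j = posRoot a b) :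
    i = a ∧ j = b := by
  have hi := congrFun h i
  have hj := congrFun h j
  simp only [posRoot, if_neg hij, if_neg hij.symm] at hi hj
  constructor
  · by_contra hia
    rw [if_neg hia] at hi
    split_ifs at hi <;> norm_num at hi
  · by_contra hjb
    rw [if_neg hjb] at hj
    split_ifs at hj <;> norm_num at hj

theorem wAct_posRoot (w : Equiv.Perm (Fin n)) (i j : Fin n) :
    wAct w (posRoot i j) = posRoot (w i) (w j) := by
  funext k
  simp only [wAct, posRoot, Equiv.Perm.inv_eq_iff_eq]

theorem posRoot_dotProduct (i j : Fin n) (v : Fin n → ℚ) : posRoot i j ⬝ᵥ v = v i - v j := by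
  simp [posRoot, dotProduct, sub_mul]

theorem posRoot_mem_image_wAct_iff (w : Equiv.Perm (Fin n)) {i j : Fin n} (hij : i ≠ j) :
    posRoot i j ∈ (PosRoots n).image (wAct w) ↔ w⁻¹ i < w⁻¹ j := by
  simp only [Finset.mem_image, mem_posRoots]
  constructor
  · rintro ⟨_, ⟨a, b, hab, rfl⟩, h⟩
    rw [wAct_posRoot] at h
    obtain ⟨rfl, rfl⟩ := eq_and_eq_of_posRoot_eq (w.injective.ne hab.ne) h
    simpa using hab
  · intro h
    exact ⟨_, ⟨_, _, h, rfl⟩, by simp [wAct_posRoot]⟩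

theorem sum_posRoots_filter (P : (Fin n → ℚ) → Prop) [DecidablePred P] :
    ∑ α ∈ PosRoots n with P α, α =
      ∑ p : Fin n × Fin n with p.1 < p.2 ∧ P (posRoot p.1 p.2), posRoot p.1 p.2 := by
  rw [PosRoots, Finset.filter_image, Finset.filter_filter, Finset.sum_image]
  rintro ⟨i, j⟩ hp ⟨a, b⟩ - h
  obtain ⟨rfl, rfl⟩ := eq_and_eq_of_posRoot_eq (Finset.mem_filter.1 hp).2.1.ne h
  rfl

theorem sum_posRoots :
    ∑ α ∈ PosRoots n, α = ∑ p : Fin n × Fin n with p.1 < p.2, posRoot p.1 p.2 := by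
  simpa using sum_posRoots_filter (n := n) (fun _ => True)

theorem sum_posRoot_apply (R : Fin n → Fin n → Prop) [DecidableRel R] (k : Fin n) :
    (∑ p : Fin n × Fin n with R p.1 p.2, posRoot p.1 p.2) k =
      ∑ j, ((if R k j then 1 else 0) - (if R j k then 1 else 0)) := by
  have hterm : ∀ i j : Fin n, (if R i j then posRoot i j k else 0) =
      (if i = k then if R i j then 1 else 0 else 0) -
        (if j = k then if R i j then 1 else 0 else 0) := by
    intro i j
    by_cases h : R i j <;> simp [h, posRoot, eq_comm]
  simp only [Finset.sum_apply, Finset.sum_filter, Fintype.sum_prod_type, Finset.sum_sub_distrib,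
    hterm]
  rw [Finset.sum_comm (f := fun i j => if j = k then if R i j then (1 : ℚ) else 0 else 0)]
  simp

theorem rho_apply (k : Fin n) : rho n k = ((n : ℚ) - 1) / 2 - k := by
  rw [rho, Pi.smul_apply, sum_posRoots, sum_posRoot_apply, Finset.sum_sub_distrib,
    Fin.sum_ite_gt, Fin.sum_ite_lt, smul_eq_mul]
  ring

theorem posRoot_dotProduct_wAct_rho (w : Equiv.Perm (Fin n)) (i j : Fin n) :
    posRoot i j ⬝ᵥ wAct w (rho n) = (w⁻¹ j : ℚ) - (w⁻¹ i : ℚ) := by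
  rw [posRoot_dotProduct]
  simp only [wAct, rho_apply]
  ring

theorem dotProduct_wAct_rho_ne_zero (w : Equiv.Perm (Fin n)) :
    ∀ α ∈ PosRoots n, α ⬝ᵥ wAct w (rho n) ≠ 0 := by
  intro α hα
  obtain ⟨i, j, hij, rfl⟩ := mem_posRoots.1 hα
  rw [posRoot_dotProduct_wAct_rho, sub_ne_zero, Ne, Nat.cast_inj, Fin.val_inj]
  exact w⁻¹.injective.ne hij.ne'

theorem filter_notMem_image_wAct (w : Equiv.Perm (Fin n)) :
    {α ∈ PosRoots n | α ∉ (PosRoots n).image (wAct w)} =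
      {α ∈ PosRoots n | α ⬝ᵥ wAct w (rho n) < 0} := by
  refine Finset.filter_congr fun α hα => ?_
  obtain ⟨i, j, hij, rfl⟩ := mem_posRoots.1 hα
  rw [posRoot_mem_image_wAct_iff w hij.ne, posRoot_dotProduct_wAct_rho, sub_neg, Nat.cast_lt,
    Fin.val_fin_lt, not_lt, (w⁻¹.injective.ne hij.ne').le_iff_lt]

theorem sum_filter_dotProduct_wAct_rho_neg (w : Equiv.Perm (Fin n)) :
    ∑ α ∈ PosRoots n with α ⬝ᵥ wAct w (rho n) < 0, α = rho n - wAct w (rho n) := by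
  simp only [sum_posRoots_filter, posRoot_dotProduct_wAct_rho, sub_neg, Nat.cast_lt,
    Fin.val_fin_lt]
  funext k
  rw [sum_posRoot_apply (fun i j => i < j ∧ w⁻¹ j < w⁻¹ i),
    Finset.sum_congr rfl fun j _ => w⁻¹.injective.ite_and_sub_ite_and k j, Finset.sum_sub_distrib,
    Equiv.sum_comp w⁻¹ (fun j => if j < w⁻¹ k then (1 : ℚ) else 0), Fin.sum_ite_lt, Fin.sum_ite_lt]
  simp only [Pi.sub_apply, wAct, rho_apply]
  ring

end

theorem unique_subset_sum_rho_sub_w_rho_general {n : ℕ}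
    (w : Equiv.Perm (Fin n)) :
    (∑ α ∈ (PosRoots n).filter (fun α => α ∉ (PosRoots n).image (wAct w)), α =
      rho n - wAct w (rho n)) ∧
    (∀ I : Finset (Fin n → ℚ), I ⊆ PosRoots n →
      ∑ α ∈ I, α = rho n - wAct w (rho n) →
        I = (PosRoots n).filter (fun α => α ∉ (PosRoots n).image (wAct w))) := by
  rw [filter_notMem_image_wAct]
  refine ⟨sum_filter_dotProduct_wAct_rho_neg w, fun I hI hsum => ?_⟩
  refine Finset.eq_filter_neg_of_sum_le (dotProduct_wAct_rho_ne_zero w) hI ?_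
  rw [← sum_dotProduct, ← sum_dotProduct, hsum, sum_filter_dotProduct_wAct_rho_neg]

/-- There is exactly one subset `I` of the positive roots whose sum is
`rho - w rho`, namely the set of positive roots not in `w Φ⁺`. -/
theorem unique_subset_sum_rho_sub_w_rho {n : ℕ} (hn : 1 ≤ n)
    (w : Equiv.Perm (Fin n)) :
    (∑ α ∈ (PosRoots n).filter (fun α => α ∉ (PosRoots n).image (wAct w)), α =
      rho n - wAct w (rho n)) ∧
    (∀ I : Finset (Fin n → ℚ), I ⊆ PosRoots n →
      ∑ α ∈ I, α = rho n - wAct w (rho n) →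
        I = (PosRoots n).filter (fun α => α ∉ (PosRoots n).image (wAct w))) :=
  unique_subset_sum_rho_sub_w_rho_general w
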